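/- For any integer r ≥ 2 and integers m1, m2, m3, m4 with 0 ≤ m_i ≤ r-2 for all i and m1+m2+m3+m4 = 2r-2, the following identity holds: the sum over i=1..4 of m_i(r-2-m_i)/(2r²), plus the three terms [r-1-(χ+1)(r-1-χ)]/(2r²) where χ ranges over χ_{12,34} = min(m1+m2, m3+m4), χ_{13,24} = min(m1+m3, m2+m4), and χ_{14,23} = min(m1+m4, m2+m3), equals (1/r)·min over i of min(m_i, r-1-m_i). -/

import Mathlib

/-!
Since the two sides of each pairing add up to `2(r-1)`, the smaller one is `χ = r - 1 - |d|` with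
`d = m_i + m_j - (r - 1)`, so the pairing term `r - 1 - (χ + 1)(r - 1 - χ)` equals
`r - 1 - r|d| + d²`. The squares `d²` combine with the quadratic terms `m_i(r - 2 - m_i)` into the
constant `r(r - 1)`, while the three `|d|` add up to `r - 1 - 2M`, `M` the minimum on the right
(for four numbers `x_i` of sum zero, `∑_j |x_1 + x_j| = 2 max_i |x_i|`). Hence the numerators
add up to `2rM`.
-/

lemma pairing_term_eq_of_add_eq {r a b : ℤ} (h : a + b = 2 * r - 2) :
    r - 1 - (min a b + 1) * (r - 1 - min a b) = r - 1 - r * |a - (r - 1)| + (a - (r - 1)) ^ 2 := by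
  rcases le_total a b with hab | hba
  · rw [min_eq_left hab, abs_of_nonpos (by omega)]
    ring
  · rw [min_eq_right hba, abs_of_nonneg (by omega)]
    linear_combination (r - a + b) * h

lemma quadratic_sum_add_pairing_squares_eq {r m1 m2 m3 m4 : ℤ}
    (hsum : m1 + m2 + m3 + m4 = 2 * r - 2) :
    m1 * (r - 2 - m1) + m2 * (r - 2 - m2) + m3 * (r - 2 - m3) + m4 * (r - 2 - m4)
      + (r - 1 + (m1 + m2 - (r - 1)) ^ 2) + (r - 1 + (m1 + m3 - (r - 1)) ^ 2)
      + (r - 1 + (m1 + m4 - (r - 1)) ^ 2) = r * (r - 1) := by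
  obtain rfl : m4 = 2 * r - 2 - m1 - m2 - m3 := by omega
  ring

lemma sum_abs_pairing_defect_eq {r m1 m2 m3 m4 : ℤ} (hsum : m1 + m2 + m3 + m4 = 2 * r - 2) :
    |m1 + m2 - (r - 1)| + |m1 + m3 - (r - 1)| + |m1 + m4 - (r - 1)| =
      r - 1 - 2 * min (min (min m1 (r - 1 - m1)) (min m2 (r - 1 - m2)))
        (min (min m3 (r - 1 - m3)) (min m4 (r - 1 - m4))) := by
  simp only [abs_eq_max_neg]
  omega

lemma numerator_sum_eq {r m1 m2 m3 m4 : ℤ} (hsum : m1 + m2 + m3 + m4 = 2 * r - 2) :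
    m1 * (r - 2 - m1) + m2 * (r - 2 - m2) + m3 * (r - 2 - m3) + m4 * (r - 2 - m4)
      + (r - 1 - (min (m1 + m2) (m3 + m4) + 1) * (r - 1 - min (m1 + m2) (m3 + m4)))
      + (r - 1 - (min (m1 + m3) (m2 + m4) + 1) * (r - 1 - min (m1 + m3) (m2 + m4)))
      + (r - 1 - (min (m1 + m4) (m2 + m3) + 1) * (r - 1 - min (m1 + m4) (m2 + m3)))
      = 2 * r * min (min (min m1 (r - 1 - m1)) (min m2 (r - 1 - m2)))
          (min (min m3 (r - 1 - m3)) (min m4 (r - 1 - m4))) := by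
  rw [pairing_term_eq_of_add_eq (by linarith), pairing_term_eq_of_add_eq (by linarith),
    pairing_term_eq_of_add_eq (by linarith)]
  linear_combination quadratic_sum_add_pairing_squares_eq hsum
    - r * sum_abs_pairing_defect_eq hsum

theorem rspin_four_point_identity_general
    (r m1 m2 m3 m4 : ℤ) (hr : 2 ≤ r)
    (hsum : m1 + m2 + m3 + m4 = 2 * r - 2) :
    ((m1 * (r - 2 - m1) + m2 * (r - 2 - m2) + m3 * (r - 2 - m3) + m4 * (r - 2 - m4) : ℤ) : ℚ)
        / (2 * (r : ℚ) ^ 2)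
      + ((r - 1 - (min (m1 + m2) (m3 + m4) + 1) * (r - 1 - min (m1 + m2) (m3 + m4)) : ℤ) : ℚ)
        / (2 * (r : ℚ) ^ 2)
      + ((r - 1 - (min (m1 + m3) (m2 + m4) + 1) * (r - 1 - min (m1 + m3) (m2 + m4)) : ℤ) : ℚ)
        / (2 * (r : ℚ) ^ 2)
      + ((r - 1 - (min (m1 + m4) (m2 + m3) + 1) * (r - 1 - min (m1 + m4) (m2 + m3)) : ℤ) : ℚ)
        / (2 * (r : ℚ) ^ 2)
      = (1 / (r : ℚ)) *
        ((min (min (min m1 (r - 1 - m1)) (min m2 (r - 1 - m2)))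
              (min (min m3 (r - 1 - m3)) (min m4 (r - 1 - m4))) : ℤ) : ℚ) := by
  have hr0 : (r : ℚ) ≠ 0 := by exact_mod_cast (by omega : r ≠ 0)
  rw [← add_div, ← add_div, ← add_div, ← Int.cast_add, ← Int.cast_add, ← Int.cast_add,
    numerator_sum_eq hsum]
  push_cast
  field_simp

/-- the four-point correlator identity for the r-spin CFT in genus zero. -/
theorem rspin_four_point_identity
    (r m1 m2 m3 m4 : ℤ) (hr : 2 ≤ r)
    (h1 : 0 ≤ m1 ∧ m1 ≤ r - 2) (h2 : 0 ≤ m2 ∧ m2 ≤ r - 2)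
    (h3 : 0 ≤ m3 ∧ m3 ≤ r - 2) (h4 : 0 ≤ m4 ∧ m4 ≤ r - 2)
    (hsum : m1 + m2 + m3 + m4 = 2 * r - 2) :
    ((m1 * (r - 2 - m1) + m2 * (r - 2 - m2) + m3 * (r - 2 - m3) + m4 * (r - 2 - m4) : ℤ) : ℚ)
        / (2 * (r : ℚ) ^ 2)
      + ((r - 1 - (min (m1 + m2) (m3 + m4) + 1) * (r - 1 - min (m1 + m2) (m3 + m4)) : ℤ) : ℚ)
        / (2 * (r : ℚ) ^ 2)
      + ((r - 1 - (min (m1 + m3) (m2 + m4) + 1) * (r - 1 - min (m1 + m3) (m2 + m4)) : ℤ) : ℚ)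
        / (2 * (r : ℚ) ^ 2)
      + ((r - 1 - (min (m1 + m4) (m2 + m3) + 1) * (r - 1 - min (m1 + m4) (m2 + m3)) : ℤ) : ℚ)
        / (2 * (r : ℚ) ^ 2)
      = (1 / (r : ℚ)) *
        ((min (min (min m1 (r - 1 - m1)) (min m2 (r - 1 - m2)))
              (min (min m3 (r - 1 - m3)) (min m4 (r - 1 - m4))) : ℤ) : ℚ) :=
  rspin_four_point_identity_general r m1 m2 m3 m4 hr hsum
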